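/- Let T be a Ptolemy diagram of the infinite strip satisfying conditions (B) and (C). Then T is τ-compact: for every arc u, the set T_u of arcs of T crossing u admits a finite τ-basis. -/
import Mathlib


/-- A marked point of the infinite strip `B∞`: an upper point `ℓ i` or a lower point `r j`. -/
inductive MPoint : Type
  | up : ℤ → MPoint
  | low : ℤ → MPoint
deriving DecidableEq

namespace Strip

open MPoint

/-- A curve is an unordered pair of marked points. -/
abbrev Curve := Sym2 MPoint

/-- Edges of the strip: `{ℓ_i, ℓ_{i+1}}` or `{r_i, r_{i+1}}`. -/
def IsEdge (c : Curve) : Prop :=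
  ∃ i : ℤ, c = s(up i, up (i + 1)) ∨ c = s(low i, low (i + 1))

/-- Arcs: non-degenerate, non-edge unordered pairs of marked points. -/
def IsArc (c : Curve) : Prop := ¬ c.IsDiag ∧ ¬ IsEdge c

/-- A connecting arc joins an upper and a lower marked point. -/
def IsConnecting (c : Curve) : Prop := ∃ i j : ℤ, c = s(up i, low j)

/-- The crossing relation on curves of the strip, given by the explicit index
conditions of Liu–Paquette (cases according to the type of `u`). -/
def Crosses (u v : Curve) : Prop :=
  (∃ i j p q : ℤ, ((i < p ∧ p < j ∧ j < q) ∨ (p < i ∧ i < q ∧ q < j)) ∧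
      u = s(up i, up j) ∧ v = s(up p, up q)) ∨
  (∃ i j p q : ℤ, (i < p ∧ p < j) ∧ u = s(up i, up j) ∧ v = s(up p, low q)) ∨
  (∃ i j p q : ℤ, ((i > p ∧ p > j ∧ j > q) ∨ (p > i ∧ i > q ∧ q > j)) ∧
      u = s(low i, low j) ∧ v = s(low p, low q)) ∨
  (∃ i j p q : ℤ, (i > q ∧ q > j) ∧ u = s(low i, low j) ∧ v = s(up p, low q)) ∨
  (∃ i j p q : ℤ, (p < i ∧ i < q) ∧ u = s(up i, low j) ∧ v = s(up p, up q)) ∨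
  (∃ i j p q : ℤ, (p > j ∧ j > q) ∧ u = s(up i, low j) ∧ v = s(low p, low q)) ∨
  (∃ i j p q : ℤ, ((i > p ∧ j > q) ∨ (i < p ∧ j < q)) ∧
      u = s(up i, low j) ∧ v = s(up p, low q))

/-- The translation `τ` on marked points, shifting indices by `+1`. -/
def tauP : MPoint → MPoint
  | up i => up (i + 1)
  | low i => low (i + 1)

/-- The inverse translation `τ⁻¹` on marked points. -/
def tauInvP : MPoint → MPoint
  | up i => up (i - 1)
  | low i => low (i - 1)

/-- The translation `τ` on curves. -/
def tau (c : Curve) : Curve := c.map tauP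

/-- The inverse translation `τ⁻¹` on curves. -/
def tauInv (c : Curve) : Curve := c.map tauInvP

/-- `key p q` is the position of the curve `[p,q]` in the clockwise linear order `>_p`
on the set `[p,−]` of curves at `p`, valued in `ℤ ×ₗ ℤ` (lexicographic order).
For `p = ℓ_P`: curves to upper points right of `p` (tier 2, increasing with index),
then connecting curves (tier 1, decreasing with index),
then curves to upper points left of `p` (tier 0, decreasing with index); dually for lower `p`. -/
def key : MPoint → MPoint → ℤ ×ₗ ℤ
  | up P, up e => if P < e then toLex (2, e) else toLex (0, -e)
  | up _, low c => toLex (1, -c)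
  | low P, low e => if P < e then toLex (2, e) else toLex (0, -e)
  | low _, up c => toLex (1, -c)

/-- `GtAt p u v` means `u >_p v`: `u` and `v` are curves sharing the endpoint `p`
and `u` is bigger than `v` in the clockwise linear order at `p`. -/
def GtAt (p : MPoint) (u v : Curve) : Prop :=
  ∃ x y : MPoint, x ≠ p ∧ y ≠ p ∧ u = s(p, x) ∧ v = s(p, y) ∧ key p y < key p x

/-- `u₃` is a middle term from `u₂` to `u₁`: a curve (arc or edge) with
`u₂ <_{p₁} u₃ <_{p₂} u₁` for some marked points `p₁`, `p₂`. -/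
def IsMiddleTerm (u₂ u₁ u₃ : Curve) : Prop :=
  ¬ u₃.IsDiag ∧ ∃ p₁ p₂ : MPoint, GtAt p₁ u₃ u₂ ∧ GtAt p₂ u₁ u₃

/-- `nc T`: the set of arcs crossing no arc of `T`. -/
def nc (T : Set Curve) : Set Curve :=
  {u | IsArc u ∧ ∀ v ∈ T, ¬ Crosses u v}

/-- `T` is a Ptolemy diagram: a set of arcs such that for any two crossing arcs
`[p,q],[i,j] ∈ T`, those of `[p,i],[p,j],[q,i],[q,j]` which are arcs lie in `T`. -/
def IsPtolemy (T : Set Curve) : Prop :=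
  (∀ u ∈ T, IsArc u) ∧
  ∀ p q i j : MPoint, s(p, q) ∈ T → s(i, j) ∈ T → Crosses s(p, q) s(i, j) →
    (IsArc s(p, i) → s(p, i) ∈ T) ∧ (IsArc s(p, j) → s(p, j) ∈ T) ∧
    (IsArc s(q, i) → s(q, i) ∈ T) ∧ (IsArc s(q, j) → s(q, j) ∈ T)

/-- `T_u`: the set of arcs of `T` crossing `u`. -/
def crossSet (T : Set Curve) (u : Curve) : Set Curve := {v ∈ T | Crosses v u}

/-- `p` is upper left `T`-bounded: `[p, ℓ_i] ∉ T` for all sufficiently small `i`. -/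
def UpperLeftBounded (T : Set Curve) (p : MPoint) : Prop :=
  ∃ j : ℤ, ∀ i : ℤ, i < j → s(p, up i) ∉ T

/-- `p` is upper right `T`-bounded: `[p, ℓ_i] ∉ T` for all sufficiently large `i`. -/
def UpperRightBounded (T : Set Curve) (p : MPoint) : Prop :=
  ∃ j : ℤ, ∀ i : ℤ, i > j → s(p, up i) ∉ T

/-- `p` is lower left `T`-bounded: `[p, r_i] ∉ T` for all sufficiently large `i`. -/
def LowerLeftBounded (T : Set Curve) (p : MPoint) : Prop :=
  ∃ j : ℤ, ∀ i : ℤ, i > j → s(p, low i) ∉ T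

/-- `p` is lower right `T`-bounded: `[p, r_i] ∉ T` for all sufficiently small `i`. -/
def LowerRightBounded (T : Set Curve) (p : MPoint) : Prop :=
  ∃ j : ℤ, ∀ i : ℤ, i < j → s(p, low i) ∉ T

/-- Condition (B): every lower right `T`-bounded marked point is upper right
`T`-bounded, and every upper left `T`-bounded marked point is lower left `T`-bounded. -/
def CondB (T : Set Curve) : Prop :=
  ∀ p : MPoint, (LowerRightBounded T p → UpperRightBounded T p) ∧
    (UpperLeftBounded T p → LowerLeftBounded T p)

/-- Condition (B'): the dual of condition (B). -/
def CondB' (T : Set Curve) : Prop :=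
  ∀ p : MPoint, (LowerLeftBounded T p → UpperLeftBounded T p) ∧
    (UpperRightBounded T p → LowerRightBounded T p)

/-- Condition (C): `T ∪ nc T` contains a connecting arc. -/
def CondC (T : Set Curve) : Prop := ∃ c ∈ T ∪ nc T, IsConnecting c

/-- `S0` is a τ-basis of `Ω`: a subset of `Ω` such that for every `u₁ ∈ Ω` there is
`u₂ ∈ S0` with `τ u₂` crossing `u₁`, and all middle terms from `u₂` to `u₁` lie in `Ω`
whenever `u₂` crosses `u₁`. -/
def IsTauBasis (Ω S0 : Set Curve) : Prop :=
  S0 ⊆ Ω ∧ ∀ u₁ ∈ Ω, ∃ u₂ ∈ S0, Crosses (tau u₂) u₁ ∧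
    (Crosses u₂ u₁ → ∀ u₃ : Curve, IsMiddleTerm u₂ u₁ u₃ → u₃ ∈ Ω)

/-- `T` is τ-compact: for every arc `u`, the set `T_u` admits a finite τ-basis. -/
def TauCompact (T : Set Curve) : Prop :=
  ∀ u : Curve, IsArc u → ∃ S0 : Set Curve, S0.Finite ∧ IsTauBasis (crossSet T u) S0

/-- `T̄`: the set `T` together with all edges of the strip. -/
def withEdges (T : Set Curve) : Set Curve := T ∪ {c | IsEdge c}

end Strip

set_option linter.unnecessarySeqFocus false
namespace Strip
open MPoint

/-! ### Crossing characterizations -/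

lemma cross_uu_iff {i j p q : ℤ} :
    Crosses s(up i, up j) s(up p, up q) ↔
      (min i j < min p q ∧ min p q < max i j ∧ max i j < max p q) ∨
      (min p q < min i j ∧ min i j < max p q ∧ max p q < max i j) := by
  constructor
  · rintro (⟨i',j',p',q',hc,h1,h2⟩|⟨i',j',p',q',hc,h1,h2⟩|⟨i',j',p',q',hc,h1,h2⟩|⟨i',j',p',q',hc,h1,h2⟩|⟨i',j',p',q',hc,h1,h2⟩|⟨i',j',p',q',hc,h1,h2⟩|⟨i',j',p',q',hc,h1,h2⟩) <;>
      [skip; skip; skip; skip; skip; skip; skip] <;>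
      simp only [Sym2.eq_iff, MPoint.up.injEq, MPoint.low.injEq, reduceCtorEq, and_false,
        false_and, or_self, or_false, false_or] at h1 h2 <;> omega
  · intro h
    rcases le_total i j with hij | hij <;> rcases le_total p q with hpq | hpq
    · exact Or.inl ⟨i,j,p,q, by omega, rfl, rfl⟩
    · exact Or.inl ⟨i,j,q,p, by omega, rfl, Sym2.eq_swap⟩
    · exact Or.inl ⟨j,i,p,q, by omega, Sym2.eq_swap, rfl⟩
    · exact Or.inl ⟨j,i,q,p, by omega, Sym2.eq_swap, Sym2.eq_swap⟩

lemma cross_uc_iff {i j p q : ℤ} :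
    Crosses s(up i, up j) s(up p, low q) ↔ min i j < p ∧ p < max i j := by
  constructor
  · rintro (⟨i',j',p',q',hc,h1,h2⟩|⟨i',j',p',q',hc,h1,h2⟩|⟨i',j',p',q',hc,h1,h2⟩|⟨i',j',p',q',hc,h1,h2⟩|⟨i',j',p',q',hc,h1,h2⟩|⟨i',j',p',q',hc,h1,h2⟩|⟨i',j',p',q',hc,h1,h2⟩) <;>
      simp only [Sym2.eq_iff, MPoint.up.injEq, MPoint.low.injEq, reduceCtorEq, and_false,
        false_and, or_self, or_false, false_or] at h1 h2 <;> omega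
  · intro h
    rcases le_total i j with hij | hij
    · exact Or.inr (Or.inl ⟨i,j,p,q, by omega, rfl, rfl⟩)
    · exact Or.inr (Or.inl ⟨j,i,p,q, by omega, Sym2.eq_swap, rfl⟩)

lemma cross_ul_not {i j p q : ℤ} : ¬ Crosses s(up i, up j) s(low p, low q) := by
  rintro (⟨i',j',p',q',hc,h1,h2⟩|⟨i',j',p',q',hc,h1,h2⟩|⟨i',j',p',q',hc,h1,h2⟩|⟨i',j',p',q',hc,h1,h2⟩|⟨i',j',p',q',hc,h1,h2⟩|⟨i',j',p',q',hc,h1,h2⟩|⟨i',j',p',q',hc,h1,h2⟩) <;>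
    simp only [Sym2.eq_iff, MPoint.up.injEq, MPoint.low.injEq, reduceCtorEq, and_false,
      false_and, or_self, or_false, false_or] at h1 h2

lemma cross_cu_iff {i j p q : ℤ} :
    Crosses s(up i, low j) s(up p, up q) ↔ min p q < i ∧ i < max p q := by
  constructor
  · rintro (⟨i',j',p',q',hc,h1,h2⟩|⟨i',j',p',q',hc,h1,h2⟩|⟨i',j',p',q',hc,h1,h2⟩|⟨i',j',p',q',hc,h1,h2⟩|⟨i',j',p',q',hc,h1,h2⟩|⟨i',j',p',q',hc,h1,h2⟩|⟨i',j',p',q',hc,h1,h2⟩) <;>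
      simp only [Sym2.eq_iff, MPoint.up.injEq, MPoint.low.injEq, reduceCtorEq, and_false,
        false_and, or_self, or_false, false_or] at h1 h2 <;> omega
  · intro h
    rcases le_total p q with hpq | hpq
    · exact Or.inr (Or.inr (Or.inr (Or.inr (Or.inl ⟨i,j,p,q, by omega, rfl, rfl⟩))))
    · exact Or.inr (Or.inr (Or.inr (Or.inr (Or.inl ⟨i,j,q,p, by omega, rfl, Sym2.eq_swap⟩))))

lemma cross_cc_iff {i j p q : ℤ} :
    Crosses s(up i, low j) s(up p, low q) ↔ (i < p ∧ j < q) ∨ (p < i ∧ q < j) := by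
  constructor
  · rintro (⟨i',j',p',q',hc,h1,h2⟩|⟨i',j',p',q',hc,h1,h2⟩|⟨i',j',p',q',hc,h1,h2⟩|⟨i',j',p',q',hc,h1,h2⟩|⟨i',j',p',q',hc,h1,h2⟩|⟨i',j',p',q',hc,h1,h2⟩|⟨i',j',p',q',hc,h1,h2⟩) <;>
      simp only [Sym2.eq_iff, MPoint.up.injEq, MPoint.low.injEq, reduceCtorEq, and_false,
        false_and, or_self, or_false, false_or] at h1 h2 <;> omega
  · intro h
    exact Or.inr (Or.inr (Or.inr (Or.inr (Or.inr (Or.inr ⟨i,j,p,q, by omega, rfl, rfl⟩)))))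

lemma cross_cl_iff {i j p q : ℤ} :
    Crosses s(up i, low j) s(low p, low q) ↔ min p q < j ∧ j < max p q := by
  constructor
  · rintro (⟨i',j',p',q',hc,h1,h2⟩|⟨i',j',p',q',hc,h1,h2⟩|⟨i',j',p',q',hc,h1,h2⟩|⟨i',j',p',q',hc,h1,h2⟩|⟨i',j',p',q',hc,h1,h2⟩|⟨i',j',p',q',hc,h1,h2⟩|⟨i',j',p',q',hc,h1,h2⟩) <;>
      simp only [Sym2.eq_iff, MPoint.up.injEq, MPoint.low.injEq, reduceCtorEq, and_false,
        false_and, or_self, or_false, false_or] at h1 h2 <;> omega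
  · intro h
    rcases le_total p q with hpq | hpq
    · exact Or.inr (Or.inr (Or.inr (Or.inr (Or.inr (Or.inl ⟨i,j,q,p, by omega, rfl, Sym2.eq_swap⟩)))))
    · exact Or.inr (Or.inr (Or.inr (Or.inr (Or.inr (Or.inl ⟨i,j,p,q, by omega, rfl, rfl⟩)))))

lemma cross_ll_iff {i j p q : ℤ} :
    Crosses s(low i, low j) s(low p, low q) ↔
      (min i j < min p q ∧ min p q < max i j ∧ max i j < max p q) ∨
      (min p q < min i j ∧ min i j < max p q ∧ max p q < max i j) := by
  constructor
  · rintro (⟨i',j',p',q',hc,h1,h2⟩|⟨i',j',p',q',hc,h1,h2⟩|⟨i',j',p',q',hc,h1,h2⟩|⟨i',j',p',q',hc,h1,h2⟩|⟨i',j',p',q',hc,h1,h2⟩|⟨i',j',p',q',hc,h1,h2⟩|⟨i',j',p',q',hc,h1,h2⟩) <;>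
      simp only [Sym2.eq_iff, MPoint.up.injEq, MPoint.low.injEq, reduceCtorEq, and_false,
        false_and, or_self, or_false, false_or] at h1 h2 <;> omega
  · intro h
    rcases le_total i j with hij | hij <;> rcases le_total p q with hpq | hpq
    · exact Or.inr (Or.inr (Or.inl ⟨j,i,q,p, by omega, Sym2.eq_swap, Sym2.eq_swap⟩))
    · exact Or.inr (Or.inr (Or.inl ⟨j,i,p,q, by omega, Sym2.eq_swap, rfl⟩))
    · exact Or.inr (Or.inr (Or.inl ⟨i,j,q,p, by omega, rfl, Sym2.eq_swap⟩))
    · exact Or.inr (Or.inr (Or.inl ⟨i,j,p,q, by omega, rfl, rfl⟩))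

lemma cross_lc_iff {i j p q : ℤ} :
    Crosses s(low i, low j) s(up p, low q) ↔ min i j < q ∧ q < max i j := by
  constructor
  · rintro (⟨i',j',p',q',hc,h1,h2⟩|⟨i',j',p',q',hc,h1,h2⟩|⟨i',j',p',q',hc,h1,h2⟩|⟨i',j',p',q',hc,h1,h2⟩|⟨i',j',p',q',hc,h1,h2⟩|⟨i',j',p',q',hc,h1,h2⟩|⟨i',j',p',q',hc,h1,h2⟩) <;>
      simp only [Sym2.eq_iff, MPoint.up.injEq, MPoint.low.injEq, reduceCtorEq, and_false,
        false_and, or_self, or_false, false_or] at h1 h2 <;> omega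
  · intro h
    rcases le_total i j with hij | hij
    · exact Or.inr (Or.inr (Or.inr (Or.inl ⟨j,i,p,q, by omega, Sym2.eq_swap, rfl⟩)))
    · exact Or.inr (Or.inr (Or.inr (Or.inl ⟨i,j,p,q, by omega, rfl, rfl⟩)))

lemma cross_lu_not {i j p q : ℤ} : ¬ Crosses s(low i, low j) s(up p, up q) := by
  rintro (⟨i',j',p',q',hc,h1,h2⟩|⟨i',j',p',q',hc,h1,h2⟩|⟨i',j',p',q',hc,h1,h2⟩|⟨i',j',p',q',hc,h1,h2⟩|⟨i',j',p',q',hc,h1,h2⟩|⟨i',j',p',q',hc,h1,h2⟩|⟨i',j',p',q',hc,h1,h2⟩) <;>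
    simp only [Sym2.eq_iff, MPoint.up.injEq, MPoint.low.injEq, reduceCtorEq, and_false,
      false_and, or_self, or_false, false_or] at h1 h2

/-! ### Basic facts -/

lemma shared_not_crosses (p x y : MPoint) : ¬ Crosses s(p, x) s(p, y) := by
  cases p with
  | up P => cases x with
    | up X => cases y with
      | up Y => rw [cross_uu_iff]; omega
      | low Y => rw [cross_uc_iff]; omega
    | low X => cases y with
      | up Y => rw [cross_cu_iff]; omega
      | low Y => rw [cross_cc_iff]; omega
  | low P => cases x with
    | up X => cases y with
      | up Y =>
        rw [Sym2.eq_swap (a := low P) (b := up X), Sym2.eq_swap (a := low P) (b := up Y),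
          cross_cc_iff]
        omega
      | low Y => rw [Sym2.eq_swap (a := low P) (b := up X), cross_cl_iff]; omega
    | low X => cases y with
      | up Y => rw [Sym2.eq_swap (a := low P) (b := up Y), cross_lc_iff]; omega
      | low Y => rw [cross_ll_iff]; omega

end Strip
namespace Strip
open MPoint

lemma tau_mk (x y : MPoint) : tau s(x, y) = s(tauP x, tauP y) := Sym2.map_pair_eq tauP x y

lemma isArc_conn (i j : ℤ) : IsArc s(up i, low j) := by
  constructor
  · simp [Sym2.mk_isDiag_iff]
  · rintro ⟨k, hk | hk⟩ <;> simp [Sym2.eq_iff] at hk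

lemma isArc_uu {i j : ℤ} (h1 : i ≠ j) (h2 : j ≠ i + 1) (h3 : i ≠ j + 1) :
    IsArc s(up i, up j) := by
  constructor
  · simp only [Sym2.mk_isDiag_iff, MPoint.up.injEq]; omega
  · rintro ⟨k, hk | hk⟩ <;> simp [Sym2.eq_iff] at hk <;> omega

lemma isArc_ll {i j : ℤ} (h1 : i ≠ j) (h2 : j ≠ i + 1) (h3 : i ≠ j + 1) :
    IsArc s(low i, low j) := by
  constructor
  · simp only [Sym2.mk_isDiag_iff, MPoint.low.injEq]; omega
  · rintro ⟨k, hk | hk⟩ <;> simp [Sym2.eq_iff] at hk <;> omega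

lemma arc_uu_facts {i j : ℤ} (h : IsArc s(up i, up j)) : i ≠ j ∧ j ≠ i + 1 ∧ i ≠ j + 1 := by
  obtain ⟨hd, he⟩ := h
  refine ⟨fun hEq => hd ?_, fun hEq => he ⟨i, Or.inl (by rw [hEq])⟩,
    fun hEq => he ⟨j, Or.inl (by rw [hEq]; exact Sym2.eq_swap)⟩⟩
  rw [hEq, Sym2.mk_isDiag_iff]

lemma arc_ll_facts {i j : ℤ} (h : IsArc s(low i, low j)) : i ≠ j ∧ j ≠ i + 1 ∧ i ≠ j + 1 := by
  obtain ⟨hd, he⟩ := h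
  refine ⟨fun hEq => hd ?_, fun hEq => he ⟨i, Or.inr (by rw [hEq])⟩,
    fun hEq => he ⟨j, Or.inr (by rw [hEq]; exact Sym2.eq_swap)⟩⟩
  rw [hEq, Sym2.mk_isDiag_iff]

lemma crosses_tau_self (x y : MPoint) (h : IsArc s(x, y)) : Crosses (tau s(x, y)) s(x, y) := by
  rw [tau_mk]
  cases x with
  | up i =>
    cases y with
    | up j =>
      obtain ⟨h1, h2, h3⟩ := arc_uu_facts h
      show Crosses s(up (i+1), up (j+1)) s(up i, up j)
      rw [cross_uu_iff]; omega
    | low j =>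
      show Crosses s(up (i+1), low (j+1)) s(up i, low j)
      rw [cross_cc_iff]; omega
  | low i =>
    cases y with
    | up j =>
      have h' : IsArc s(up j, low i) := by rwa [Sym2.eq_swap] at h
      show Crosses s(low (i+1), up (j+1)) s(low i, up j)
      rw [Sym2.eq_swap (a := low (i+1)), Sym2.eq_swap (a := low i), cross_cc_iff]; omega
    | low j =>
      obtain ⟨h1, h2, h3⟩ := arc_ll_facts h
      show Crosses s(low (i+1), low (j+1)) s(low i, low j)
      rw [cross_ll_iff]; omega

lemma bddAbove_of_bound {S : Set ℤ} (Q : ℤ) (h : ∀ i ∈ S, i ≤ Q) : BddAbove S := ⟨Q, h⟩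

lemma exists_gt_of_not_bddAbove {S : Set ℤ} (h : ¬ BddAbove S) (j : ℤ) : ∃ i ∈ S, j < i := by
  by_contra hc
  push_neg at hc
  exact h ⟨j, fun x hx => hc x hx⟩

section CondBLemmas
variable {T : Set Curve}

lemma condB_rl (hB : CondB T) (p : MPoint) (h : ∀ j : ℤ, ∃ i, j < i ∧ s(p, up i) ∈ T)
    (j : ℤ) : ∃ i, i < j ∧ s(p, low i) ∈ T := by
  by_contra hc
  push_neg at hc
  obtain ⟨J, hJ⟩ := (hB p).1 ⟨j, fun i hi => hc i hi⟩
  obtain ⟨i, hi, hm⟩ := h J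
  exact hJ i hi hm

lemma condB_lu (hB : CondB T) (p : MPoint) (h : ∀ j : ℤ, ∃ i, j < i ∧ s(p, low i) ∈ T)
    (j : ℤ) : ∃ i, i < j ∧ s(p, up i) ∈ T := by
  by_contra hc
  push_neg at hc
  obtain ⟨J, hJ⟩ := (hB p).2 ⟨j, fun i hi => hc i hi⟩
  obtain ⟨i, hi, hm⟩ := h J
  exact hJ i hi hm

end CondBLemmas
end Strip
namespace Strip
open MPoint

lemma mem_upper_decomp {T : Set Curve} {a b : ℤ} (hab : a < b) :
    ∀ v ∈ crossSet T s(up a, up b), ∃ p z, a < p ∧ p < b ∧ v = s(up p, z) ∧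
      ((∃ q, (q < a ∨ b < q) ∧ z = up q) ∨ ∃ c, z = low c) := by
  intro v
  induction v using Sym2.ind with
  | _ x y =>
    intro hv
    obtain ⟨hvT, hcr⟩ := hv
    cases x with
    | up i =>
      cases y with
      | up j =>
        rw [cross_uu_iff] at hcr
        by_cases hi : a < i ∧ i < b
        · exact ⟨i, up j, hi.1, hi.2, rfl, Or.inl ⟨j, by omega, rfl⟩⟩
        · exact ⟨j, up i, by omega, by omega, Sym2.eq_swap, Or.inl ⟨i, by omega, rfl⟩⟩
      | low j =>
        rw [cross_cu_iff] at hcr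
        exact ⟨i, low j, by omega, by omega, rfl, Or.inr ⟨j, rfl⟩⟩
    | low i =>
      cases y with
      | up j =>
        rw [Sym2.eq_swap (a := low i)] at hcr
        rw [cross_cu_iff] at hcr
        exact ⟨j, low i, by omega, by omega, Sym2.eq_swap, Or.inr ⟨i, rfl⟩⟩
      | low j => exact absurd hcr cross_lu_not

lemma upper_slice (T : Set Curve) (hT : IsPtolemy T) (hB : CondB T) (a b : ℤ)
    (hab : a + 2 ≤ b) (p : ℤ) :
    ∃ S : Set Curve, S.Finite ∧ S ⊆ crossSet T s(up a, up b) ∧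
      (a < p → p < b → ∀ z, s(up p, z) ∈ crossSet T s(up a, up b) →
        ∃ u₂ ∈ S, Crosses (tau u₂) s(up p, z) ∧ ¬ Crosses u₂ s(up p, z)) := by
  by_cases hp : a < p ∧ p < b
  · obtain ⟨hpa, hpb⟩ := hp
    by_cases hBp : ∃ m, m < a ∧ s(up p, up m) ∈ T
    · -- upper-left anchor
      obtain ⟨m₀, hm₀a, hm₀T⟩ := hBp
      refine ⟨{s(up p, up m₀)} ∪ (fun m => s(up p, up m)) ''
          {m | m₀ < m ∧ m < a ∧ s(up p, up m) ∈ T}, ?_, ?_, ?_⟩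
      · exact (Set.finite_singleton _).union
          (((Set.finite_Ioo m₀ a).subset (fun m hm => ⟨hm.1, hm.2.1⟩)).image _)
      · rintro v (rfl | ⟨m, ⟨hm1, hm2, hm3⟩, rfl⟩)
        · exact ⟨hm₀T, by rw [cross_uu_iff]; omega⟩
        · exact ⟨hm3, by rw [cross_uu_iff]; omega⟩
      · intro _ _ z hz
        cases z with
        | up q =>
          have hq : q < a ∨ b < q := by
            have := hz.2
            rw [cross_uu_iff] at this
            omega
          rcases le_or_gt q m₀ with hqm | hqm
          · refine ⟨s(up p, up m₀), Or.inl rfl, ?_, shared_not_crosses (up p) (up m₀) (up q)⟩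
            rw [tau_mk]
            show Crosses s(up (p+1), up (m₀+1)) s(up p, up q)
            rw [cross_uu_iff]; omega
          · rcases hq with hqa | hqb
            · refine ⟨s(up p, up q), Or.inr ⟨q, ⟨hqm, hqa, hz.1⟩, rfl⟩,
                crosses_tau_self _ _ (hT.1 _ hz.1), shared_not_crosses (up p) (up q) (up q)⟩
            · refine ⟨s(up p, up m₀), Or.inl rfl, ?_, shared_not_crosses (up p) (up m₀) (up q)⟩
              rw [tau_mk]
              show Crosses s(up (p+1), up (m₀+1)) s(up p, up q)
              rw [cross_uu_iff]; omega
        | low c =>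
          refine ⟨s(up p, up m₀), Or.inl rfl, ?_, shared_not_crosses (up p) (up m₀) (low c)⟩
          rw [tau_mk]
          show Crosses s(up (p+1), up (m₀+1)) s(up p, low c)
          rw [cross_uc_iff]; omega
    · push_neg at hBp
      by_cases hCp : ∃ c, s(up p, low c) ∈ T
      · -- connecting anchor with maximal c
        have hCbdd : ∃ Q, ∀ c, s(up p, low c) ∈ T → c ≤ Q := by
          by_contra hub
          push_neg at hub
          have hinf : ∀ j : ℤ, ∃ i, j < i ∧ s(up p, low i) ∈ T := by
            intro j
            obtain ⟨c, hc1, hc2⟩ := hub j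
            exact ⟨c, hc2, hc1⟩
          obtain ⟨i, hia, him⟩ := condB_lu hB (up p) hinf a
          exact hBp i hia him
        obtain ⟨c₀, hc₀T, hc₀max⟩ := Int.exists_greatest_of_bdd hCbdd hCp
        refine ⟨{s(up p, low c₀)}, Set.finite_singleton _, ?_, ?_⟩
        · rintro v rfl
          exact ⟨hc₀T, by rw [cross_cu_iff]; omega⟩
        · intro _ _ z hz
          cases z with
          | up q =>
            have hq : q < a ∨ b < q := by
              have := hz.2
              rw [cross_uu_iff] at this
              omega
            have hqb : b < q := by
              rcases hq with h | h
              · exact absurd hz.1 (hBp q h)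
              · exact h
            refine ⟨s(up p, low c₀), rfl, ?_, shared_not_crosses (up p) (low c₀) (up q)⟩
            rw [tau_mk]
            show Crosses s(up (p+1), low (c₀+1)) s(up p, up q)
            rw [cross_cu_iff]; omega
          | low c =>
            have hc : c ≤ c₀ := hc₀max c hz.1
            refine ⟨s(up p, low c₀), rfl, ?_, shared_not_crosses (up p) (low c₀) (low c)⟩
            rw [tau_mk]
            show Crosses s(up (p+1), low (c₀+1)) s(up p, low c)
            rw [cross_cc_iff]; omega
      · -- everything through p is upper-right, finitely many
        push_neg at hCp
        have hAbdd : ∃ Q, ∀ q ∈ {q | b < q ∧ s(up p, up q) ∈ T}, q ≤ Q := by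
          by_contra hub
          push_neg at hub
          have hinf : ∀ j : ℤ, ∃ i, j < i ∧ s(up p, up i) ∈ T := by
            intro j
            obtain ⟨q, ⟨_, hq2⟩, hq3⟩ := hub (max j b)
            exact ⟨q, by omega, hq2⟩
          obtain ⟨i, _, him⟩ := condB_rl hB (up p) hinf 0
          exact hCp i him
        obtain ⟨Q, hQ⟩ := hAbdd
        refine ⟨(fun q => s(up p, up q)) '' {q | b < q ∧ s(up p, up q) ∈ T},
          ((Set.finite_Ioc b Q).subset (fun q hq => ⟨hq.1, hQ q hq⟩)).image _, ?_, ?_⟩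
        · rintro v ⟨q, ⟨hq1, hq2⟩, rfl⟩
          exact ⟨hq2, by rw [cross_uu_iff]; omega⟩
        · intro _ _ z hz
          cases z with
          | up q =>
            have hq : q < a ∨ b < q := by
              have := hz.2
              rw [cross_uu_iff] at this
              omega
            have hqb : b < q := by
              rcases hq with h | h
              · exact absurd hz.1 (hBp q h)
              · exact h
            exact ⟨s(up p, up q), ⟨q, ⟨hqb, hz.1⟩, rfl⟩,
              crosses_tau_self _ _ (hT.1 _ hz.1), shared_not_crosses (up p) (up q) (up q)⟩
          | low c => exact absurd hz.1 (hCp c)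
  · exact ⟨∅, Set.finite_empty, Set.empty_subset _, fun h1 h2 => absurd ⟨h1, h2⟩ hp⟩

lemma upper_case (T : Set Curve) (hT : IsPtolemy T) (hB : CondB T) (a b : ℤ)
    (hab : a + 2 ≤ b) :
    ∃ S0 : Set Curve, S0.Finite ∧ IsTauBasis (crossSet T s(up a, up b)) S0 := by
  have hslice := fun p => upper_slice T hT hB a b hab p
  choose F hF1 hF2 hF3 using hslice
  refine ⟨⋃ p ∈ Set.Ioo a b, F p, (Set.finite_Ioo a b).biUnion (fun p _ => hF1 p), ?_, ?_⟩
  · exact Set.iUnion₂_subset (fun p _ => hF2 p)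
  · intro u₁ hu₁
    obtain ⟨p, z, hp1, hp2, rfl, -⟩ := mem_upper_decomp (by omega) u₁ hu₁
    obtain ⟨u₂, hu₂S, hcr, hnc⟩ := hF3 p hp1 hp2 z hu₁
    refine ⟨u₂, ?_, hcr, fun hc => absurd hc hnc⟩
    exact Set.mem_biUnion ⟨hp1, hp2⟩ hu₂S
end Strip
namespace Strip
open MPoint

lemma mem_lower_decomp {T : Set Curve} {a b : ℤ} (hab : b < a) :
    ∀ v ∈ crossSet T s(low a, low b), ∃ p z, b < p ∧ p < a ∧ v = s(low p, z) ∧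
      ((∃ q, (q < b ∨ a < q) ∧ z = low q) ∨ ∃ c, z = up c) := by
  intro v
  induction v using Sym2.ind with
  | _ x y =>
    intro hv
    obtain ⟨hvT, hcr⟩ := hv
    cases x with
    | low i =>
      cases y with
      | low j =>
        rw [cross_ll_iff] at hcr
        by_cases hi : b < i ∧ i < a
        · exact ⟨i, low j, hi.1, hi.2, rfl, Or.inl ⟨j, by omega, rfl⟩⟩
        · exact ⟨j, low i, by omega, by omega, Sym2.eq_swap, Or.inl ⟨i, by omega, rfl⟩⟩
      | up j =>
        rw [Sym2.eq_swap (a := low i)] at hcr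
        rw [cross_cl_iff] at hcr
        exact ⟨i, up j, by omega, by omega, rfl, Or.inr ⟨j, rfl⟩⟩
    | up i =>
      cases y with
      | low j =>
        rw [cross_cl_iff] at hcr
        exact ⟨j, up i, by omega, by omega, Sym2.eq_swap, Or.inr ⟨i, rfl⟩⟩
      | up j => exact absurd hcr cross_ul_not

lemma lower_slice (T : Set Curve) (hT : IsPtolemy T) (hB : CondB T) (a b : ℤ)
    (hab : b + 2 ≤ a) (p : ℤ) :
    ∃ S : Set Curve, S.Finite ∧ S ⊆ crossSet T s(low a, low b) ∧
      (b < p → p < a → ∀ z, s(low p, z) ∈ crossSet T s(low a, low b) →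
        ∃ u₂ ∈ S, Crosses (tau u₂) s(low p, z) ∧ ¬ Crosses u₂ s(low p, z)) := by
  by_cases hp : b < p ∧ p < a
  · obtain ⟨hpb, hpa⟩ := hp
    by_cases hBp : ∃ m, m < b ∧ s(low p, low m) ∈ T
    · -- lower-left anchor
      obtain ⟨m₀, hm₀b, hm₀T⟩ := hBp
      refine ⟨{s(low p, low m₀)} ∪ (fun m => s(low p, low m)) ''
          {m | m₀ < m ∧ m < b ∧ s(low p, low m) ∈ T}, ?_, ?_, ?_⟩
      · exact (Set.finite_singleton _).union
          (((Set.finite_Ioo m₀ b).subset (fun m hm => ⟨hm.1, hm.2.1⟩)).image _)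
      · rintro v (rfl | ⟨m, ⟨hm1, hm2, hm3⟩, rfl⟩)
        · exact ⟨hm₀T, by rw [cross_ll_iff]; omega⟩
        · exact ⟨hm3, by rw [cross_ll_iff]; omega⟩
      · intro _ _ z hz
        cases z with
        | low q =>
          have hq : q < b ∨ a < q := by
            have := hz.2
            rw [cross_ll_iff] at this
            omega
          rcases le_or_gt q m₀ with hqm | hqm
          · refine ⟨s(low p, low m₀), Or.inl rfl, ?_, shared_not_crosses (low p) (low m₀) (low q)⟩
            rw [tau_mk]
            show Crosses s(low (p+1), low (m₀+1)) s(low p, low q)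
            rw [cross_ll_iff]; omega
          · rcases hq with hqb | hqa
            · refine ⟨s(low p, low q), Or.inr ⟨q, ⟨hqm, hqb, hz.1⟩, rfl⟩,
                crosses_tau_self _ _ (hT.1 _ hz.1), shared_not_crosses (low p) (low q) (low q)⟩
            · refine ⟨s(low p, low m₀), Or.inl rfl, ?_, shared_not_crosses (low p) (low m₀) (low q)⟩
              rw [tau_mk]
              show Crosses s(low (p+1), low (m₀+1)) s(low p, low q)
              rw [cross_ll_iff]; omega
        | up c =>
          refine ⟨s(low p, low m₀), Or.inl rfl, ?_, shared_not_crosses (low p) (low m₀) (up c)⟩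
          rw [tau_mk]
          show Crosses s(low (p+1), low (m₀+1)) s(low p, up c)
          rw [Sym2.eq_swap (a := low p) (b := up c), cross_lc_iff]; omega
    · push_neg at hBp
      by_cases hCp : ∃ c, s(low p, up c) ∈ T
      · -- connecting anchor with maximal c
        have hCbdd : ∃ Q, ∀ c, s(low p, up c) ∈ T → c ≤ Q := by
          by_contra hub
          push_neg at hub
          have hinf : ∀ j : ℤ, ∃ i, j < i ∧ s(low p, up i) ∈ T := by
            intro j
            obtain ⟨c, hc1, hc2⟩ := hub j
            exact ⟨c, hc2, hc1⟩
          obtain ⟨i, hib, him⟩ := condB_rl hB (low p) hinf b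
          exact hBp i hib him
        obtain ⟨c₀, hc₀T, hc₀max⟩ := Int.exists_greatest_of_bdd hCbdd hCp
        refine ⟨{s(low p, up c₀)}, Set.finite_singleton _, ?_, ?_⟩
        · rintro v rfl
          refine ⟨hc₀T, ?_⟩
          rw [Sym2.eq_swap (a := low p) (b := up c₀), cross_cl_iff]; omega
        · intro _ _ z hz
          cases z with
          | low q =>
            have hq : q < b ∨ a < q := by
              have := hz.2
              rw [cross_ll_iff] at this
              omega
            have hqa : a < q := by
              rcases hq with h | h
              · exact absurd hz.1 (hBp q h)
              · exact h
            refine ⟨s(low p, up c₀), rfl, ?_, shared_not_crosses (low p) (up c₀) (low q)⟩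
            rw [tau_mk]
            show Crosses s(low (p+1), up (c₀+1)) s(low p, low q)
            rw [Sym2.eq_swap (a := low (p+1)), cross_cl_iff]; omega
          | up c =>
            have hc : c ≤ c₀ := hc₀max c hz.1
            refine ⟨s(low p, up c₀), rfl, ?_, shared_not_crosses (low p) (up c₀) (up c)⟩
            rw [tau_mk]
            show Crosses s(low (p+1), up (c₀+1)) s(low p, up c)
            rw [Sym2.eq_swap (a := low (p+1)), Sym2.eq_swap (a := low p), cross_cc_iff]
            omega
      · -- everything through p is lower-right, finitely many
        push_neg at hCp
        have hAbdd : ∃ Q, ∀ q ∈ {q | a < q ∧ s(low p, low q) ∈ T}, q ≤ Q := by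
          by_contra hub
          push_neg at hub
          have hinf : ∀ j : ℤ, ∃ i, j < i ∧ s(low p, low i) ∈ T := by
            intro j
            obtain ⟨q, ⟨_, hq2⟩, hq3⟩ := hub (max j a)
            exact ⟨q, by omega, hq2⟩
          obtain ⟨i, _, him⟩ := condB_lu hB (low p) hinf 0
          exact hCp i him
        obtain ⟨Q, hQ⟩ := hAbdd
        refine ⟨(fun q => s(low p, low q)) '' {q | a < q ∧ s(low p, low q) ∈ T},
          ((Set.finite_Ioc a Q).subset (fun q hq => ⟨hq.1, hQ q hq⟩)).image _, ?_, ?_⟩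
        · rintro v ⟨q, ⟨hq1, hq2⟩, rfl⟩
          exact ⟨hq2, by rw [cross_ll_iff]; omega⟩
        · intro _ _ z hz
          cases z with
          | low q =>
            have hq : q < b ∨ a < q := by
              have := hz.2
              rw [cross_ll_iff] at this
              omega
            have hqa : a < q := by
              rcases hq with h | h
              · exact absurd hz.1 (hBp q h)
              · exact h
            exact ⟨s(low p, low q), ⟨q, ⟨hqa, hz.1⟩, rfl⟩,
              crosses_tau_self _ _ (hT.1 _ hz.1), shared_not_crosses (low p) (low q) (low q)⟩
          | up c => exact absurd hz.1 (hCp c)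
  · exact ⟨∅, Set.finite_empty, Set.empty_subset _, fun h1 h2 => absurd ⟨h1, h2⟩ hp⟩

lemma lower_case (T : Set Curve) (hT : IsPtolemy T) (hB : CondB T) (a b : ℤ)
    (hab : b + 2 ≤ a) :
    ∃ S0 : Set Curve, S0.Finite ∧ IsTauBasis (crossSet T s(low a, low b)) S0 := by
  have hslice := fun p => lower_slice T hT hB a b hab p
  choose F hF1 hF2 hF3 using hslice
  refine ⟨⋃ p ∈ Set.Ioo b a, F p, (Set.finite_Ioo b a).biUnion (fun p _ => hF1 p), ?_, ?_⟩
  · exact Set.iUnion₂_subset (fun p _ => hF2 p)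
  · intro u₁ hu₁
    obtain ⟨p, z, hp1, hp2, rfl, -⟩ := mem_lower_decomp (by omega) u₁ hu₁
    obtain ⟨u₂, hu₂S, hcr, hnc⟩ := hF3 p hp1 hp2 z hu₁
    refine ⟨u₂, ?_, hcr, fun hc => absurd hc hnc⟩
    exact Set.mem_biUnion ⟨hp1, hp2⟩ hu₂S
end Strip
namespace Strip
open MPoint

/-- `x` lies strictly on the left side of the connecting arc `[ℓ_a, r_b]`. -/
def SideL (a b : ℤ) : MPoint → Prop
  | up m => m < a
  | low c => b < c

/-- `y` lies strictly on the right side of the connecting arc `[ℓ_a, r_b]`. -/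
def SideR (a b : ℤ) : MPoint → Prop
  | up q => a < q
  | low d => d < b

/-- Order on the left side. -/
def LLe : MPoint → MPoint → Prop
  | up m, up m' => m ≤ m'
  | up _, low _ => False
  | low _, up _ => True
  | low c, low c' => c ≤ c'

/-- Order on the right side. -/
def RLe : MPoint → MPoint → Prop
  | up q, up q' => q ≤ q'
  | up _, low _ => True
  | low _, up _ => False
  | low d, low d' => d ≤ d'

section Sides
variable {a b : ℤ} {x y x₁ y₁ x₂ y₂ : MPoint}

lemma sides_ne (hx : SideL a b x) (hy : SideR a b y) : x ≠ y := by
  cases x <;> cases y <;> simp only [SideL, SideR] at hx hy <;> simp <;> omega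

lemma arc_of_sides (hx : SideL a b x) (hy : SideR a b y) : IsArc s(x, y) := by
  cases x with
  | up m =>
    cases y with
    | up q =>
      simp only [SideL, SideR] at hx hy
      exact isArc_uu (by omega) (by omega) (by omega)
    | low d => exact isArc_conn _ _
  | low c =>
    cases y with
    | up q => rw [Sym2.eq_swap]; exact isArc_conn _ _
    | low d =>
      simp only [SideL, SideR] at hx hy
      exact isArc_ll (by omega) (by omega) (by omega)

lemma crossesU_of_sides (hx : SideL a b x) (hy : SideR a b y) :
    Crosses s(x, y) s(up a, low b) := by
  cases x with
  | up m =>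
    cases y with
    | up q =>
      simp only [SideL, SideR] at hx hy
      rw [cross_uc_iff]; omega
    | low d =>
      simp only [SideL, SideR] at hx hy
      rw [cross_cc_iff]; omega
  | low c =>
    cases y with
    | up q =>
      simp only [SideL, SideR] at hx hy
      rw [Sym2.eq_swap, cross_cc_iff]; omega
    | low d =>
      simp only [SideL, SideR] at hx hy
      rw [cross_lc_iff]; omega

lemma serve_cross (hx1 : SideL a b x₁) (hy1 : SideR a b y₁) (hx2 : SideL a b x₂)
    (hy2 : SideR a b y₂) (hl : LLe x₁ x₂) (hr : RLe y₁ y₂) :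
    Crosses (tau s(x₂, y₂)) s(x₁, y₁) := by
  rw [tau_mk]
  cases x₂ with
  | up m2 =>
    cases y₂ with
    | up q2 =>
      show Crosses s(up (m2+1), up (q2+1)) s(x₁, y₁)
      cases x₁ with
      | up m1 =>
        cases y₁ with
        | up q1 =>
          simp only [SideL, SideR, LLe, RLe] at *
          rw [cross_uu_iff]; omega
        | low d1 =>
          simp only [RLe] at hr
      | low c1 =>
        cases y₁ with
        | up q1 =>
          simp only [SideL, SideR, LLe, RLe] at *
          rw [Sym2.eq_swap (a := low c1), cross_uc_iff]; omega
        | low d1 =>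
          simp only [RLe] at hr
    | low d2 =>
      show Crosses s(up (m2+1), low (d2+1)) s(x₁, y₁)
      cases x₁ with
      | up m1 =>
        cases y₁ with
        | up q1 =>
          simp only [SideL, SideR, LLe, RLe] at *
          rw [cross_cu_iff]; omega
        | low d1 =>
          simp only [SideL, SideR, LLe, RLe] at *
          rw [cross_cc_iff]; omega
      | low c1 =>
        cases y₁ with
        | up q1 =>
          simp only [SideL, SideR, LLe, RLe] at *
          rw [Sym2.eq_swap (a := low c1), cross_cc_iff]; omega
        | low d1 =>
          simp only [SideL, SideR, LLe, RLe] at *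
          rw [cross_cl_iff]; omega
  | low c2 =>
    cases y₂ with
    | up q2 =>
      show Crosses s(low (c2+1), up (q2+1)) s(x₁, y₁)
      cases x₁ with
      | up m1 => simp only [LLe] at hl
      | low c1 =>
        cases y₁ with
        | up q1 =>
          simp only [SideL, SideR, LLe, RLe] at *
          rw [Sym2.eq_swap (a := low (c2+1)), Sym2.eq_swap (a := low c1), cross_cc_iff]
          omega
        | low d1 =>
          simp only [RLe] at hr
    | low d2 =>
      show Crosses s(low (c2+1), low (d2+1)) s(x₁, y₁)
      cases x₁ with
      | up m1 => simp only [LLe] at hl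
      | low c1 =>
        cases y₁ with
        | up q1 =>
          simp only [SideL, SideR, LLe, RLe] at *
          rw [Sym2.eq_swap (a := low c1), cross_lc_iff]; omega
        | low d1 =>
          simp only [SideL, SideR, LLe, RLe] at *
          rw [cross_ll_iff]; omega

lemma exclL (hx1 : SideL a b x₁) (hx2 : SideL a b x₂) (hy2 : SideR a b y₂)
    (hne : x₁ ≠ x₂) (hl : LLe x₁ x₂) : key x₂ x₁ < key x₂ y₂ := by
  cases x₂ with
  | up P =>
    cases x₁ with
    | up m =>
      simp only [SideL, LLe, MPoint.up.injEq, ne_eq] at hx1 hx2 hl hne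
      have hmP : ¬ P < m := by omega
      cases y₂ with
      | up q =>
        simp only [SideR] at hy2
        show (if P < m then toLex ((2:ℤ), m) else toLex (0, -m)) <
          (if P < q then toLex ((2:ℤ), q) else toLex (0, -q))
        rw [if_neg hmP, if_pos (by omega), Prod.Lex.lt_iff]
        norm_num
      | low d =>
        show (if P < m then toLex ((2:ℤ), m) else toLex (0, -m)) < toLex (1, -d)
        rw [if_neg hmP, Prod.Lex.lt_iff]
        norm_num
    | low c =>
      simp only [SideL] at hx1 hx2
      cases y₂ with
      | up q =>
        simp only [SideR] at hy2
        show toLex ((1:ℤ), -c) < (if P < q then toLex ((2:ℤ), q) else toLex (0, -q))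
        rw [if_pos (by omega), Prod.Lex.lt_iff]
        norm_num
      | low d =>
        simp only [SideR] at hy2
        show toLex ((1:ℤ), -c) < toLex (1, -d)
        rw [Prod.Lex.lt_iff]
        norm_num
        try omega
  | low C =>
    cases x₁ with
    | up m => simp only [LLe] at hl
    | low c =>
      simp only [SideL, LLe, MPoint.low.injEq, ne_eq] at hx1 hx2 hl hne
      have hcC : ¬ C < c := by omega
      cases y₂ with
      | up q =>
        show (if C < c then toLex ((2:ℤ), c) else toLex (0, -c)) < toLex (1, -q)
        rw [if_neg hcC, Prod.Lex.lt_iff]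
        norm_num
      | low d =>
        simp only [SideR] at hy2
        show (if C < c then toLex ((2:ℤ), c) else toLex (0, -c)) <
          (if C < d then toLex ((2:ℤ), d) else toLex (0, -d))
        rw [if_neg hcC, if_neg (by omega), Prod.Lex.lt_iff]
        norm_num
        try omega

lemma exclR (hy1 : SideR a b y₁) (hy2 : SideR a b y₂) (hx2 : SideL a b x₂)
    (hne : y₁ ≠ y₂) (hr : RLe y₁ y₂) : key y₂ y₁ < key y₂ x₂ := by
  cases y₂ with
  | up Q =>
    cases y₁ with
    | up q =>
      simp only [SideR, RLe, MPoint.up.injEq, ne_eq] at hy1 hy2 hr hne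
      have hqQ : ¬ Q < q := by omega
      cases x₂ with
      | up m =>
        simp only [SideL] at hx2
        show (if Q < q then toLex ((2:ℤ), q) else toLex (0, -q)) <
          (if Q < m then toLex ((2:ℤ), m) else toLex (0, -m))
        rw [if_neg hqQ, if_neg (by omega), Prod.Lex.lt_iff]
        norm_num
        try omega
      | low c =>
        show (if Q < q then toLex ((2:ℤ), q) else toLex (0, -q)) < toLex (1, -c)
        rw [if_neg hqQ, Prod.Lex.lt_iff]
        norm_num
    | low d => simp only [RLe] at hr
  | low D =>
    cases y₁ with
    | up q =>
      simp only [SideR] at hy1 hy2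
      cases x₂ with
      | up m =>
        simp only [SideL] at hx2
        show toLex ((1:ℤ), -q) < toLex (1, -m)
        rw [Prod.Lex.lt_iff]
        norm_num
        try omega
      | low c =>
        simp only [SideL] at hx2
        show toLex ((1:ℤ), -q) < (if D < c then toLex ((2:ℤ), c) else toLex (0, -c))
        rw [if_pos (by omega), Prod.Lex.lt_iff]
        norm_num
    | low d =>
      simp only [SideR, RLe, MPoint.low.injEq, ne_eq] at hy1 hy2 hr hne
      have hdD : ¬ D < d := by omega
      cases x₂ with
      | up m =>
        show (if D < d then toLex ((2:ℤ), d) else toLex (0, -d)) < toLex (1, -m)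
        rw [if_neg hdD, Prod.Lex.lt_iff]
        norm_num
      | low c =>
        simp only [SideL] at hx2
        show (if D < d then toLex ((2:ℤ), d) else toLex (0, -d)) <
          (if D < c then toLex ((2:ℤ), c) else toLex (0, -c))
        rw [if_neg hdD, if_pos (by omega), Prod.Lex.lt_iff]
        norm_num

lemma middle_in {T : Set Curve} (hT : IsPtolemy T)
    (hx2 : SideL a b x₂) (hy2 : SideR a b y₂) (hx1 : SideL a b x₁) (hy1 : SideR a b y₁)
    (h2T : s(x₂, y₂) ∈ T) (h1T : s(x₁, y₁) ∈ T)
    (hl : LLe x₁ x₂) (hr : RLe y₁ y₂)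
    (hcr : Crosses s(x₂, y₂) s(x₁, y₁)) :
    ∀ u₃, IsMiddleTerm s(x₂, y₂) s(x₁, y₁) u₃ → u₃ ∈ crossSet T s(up a, low b) := by
  have hxne : x₁ ≠ x₂ := by
    rintro rfl
    exact shared_not_crosses x₁ y₂ y₁ hcr
  have hyne : y₁ ≠ y₂ := by
    rintro rfl
    rw [Sym2.eq_swap (a := x₂), Sym2.eq_swap (a := x₁)] at hcr
    exact shared_not_crosses y₁ x₂ x₁ hcr
  have hx2y1 : x₂ ≠ y₁ := sides_ne hx2 hy1
  have hx1y2 : x₁ ≠ y₂ := sides_ne hx1 hy2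
  have hx1y1 : x₁ ≠ y₁ := sides_ne hx1 hy1
  have hx2y2 : x₂ ≠ y₂ := sides_ne hx2 hy2
  have hpt := hT.2 x₂ y₂ x₁ y₁ h2T h1T hcr
  rintro u₃ ⟨hnd, p₁, p₂, ⟨w, z, hwne, hzne, hu₃, hu₂e, hk1⟩,
    ⟨w', z', hw'ne, hz'ne, hu₁e, hu₃e, hk2⟩⟩
  rw [Sym2.eq_iff] at hu₂e hu₁e
  rcases hu₂e with ⟨h1, h2⟩ | ⟨h1, h2⟩ <;> rcases hu₁e with ⟨h3, h4⟩ | ⟨h3, h4⟩ <;>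
    subst h1 <;> subst h2 <;> subst h3 <;> subst h4
  · -- p₁ = x₂, p₂ = x₁ : excluded
    exfalso
    have hw : w = x₁ := by
      rw [hu₃, Sym2.eq_iff] at hu₃e
      rcases hu₃e with ⟨ha1, _⟩ | ⟨_, ha2⟩
      · exact absurd ha1 hxne.symm
      · exact ha2
    rw [hw] at hk1
    exact absurd hk1 (lt_asymm (exclL hx1 hx2 hy2 hxne hl))
  · -- p₁ = x₂, p₂ = y₁ : good, u₃ = s(x₂, y₁)
    have hw : w = y₁ := by
      rw [hu₃, Sym2.eq_iff] at hu₃e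
      rcases hu₃e with ⟨ha1, _⟩ | ⟨_, ha2⟩
      · exact absurd ha1 hx2y1
      · exact ha2
    rw [hu₃, hw]
    exact ⟨hpt.2.1 (arc_of_sides hx2 hy1), crossesU_of_sides hx2 hy1⟩
  · -- p₁ = y₂, p₂ = x₁ : good, u₃ = s(y₂, x₁)
    have hw : w = x₁ := by
      rw [hu₃, Sym2.eq_iff] at hu₃e
      rcases hu₃e with ⟨ha1, _⟩ | ⟨_, ha2⟩
      · exact absurd ha1 hx1y2.symm
      · exact ha2
    rw [hu₃, hw]
    refine ⟨hpt.2.2.1 ?_, ?_⟩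
    · rw [Sym2.eq_swap]
      exact arc_of_sides hx1 hy2
    · rw [Sym2.eq_swap]
      exact crossesU_of_sides hx1 hy2
  · -- p₁ = y₂, p₂ = y₁ : excluded
    exfalso
    have hw : w = y₁ := by
      rw [hu₃, Sym2.eq_iff] at hu₃e
      rcases hu₃e with ⟨ha1, _⟩ | ⟨_, ha2⟩
      · exact absurd ha1 hyne.symm
      · exact ha2
    rw [hw] at hk1
    exact absurd hk1 (lt_asymm (exclR hy1 hy2 hx2 hyne hr))

end Sides
end Strip
namespace Strip
open MPoint

section Conn
variable {T : Set Curve} {a b : ℤ}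

lemma mem_conn_decomp :
    ∀ v ∈ crossSet T s(up a, low b), ∃ x y, SideL a b x ∧ SideR a b y ∧ v = s(x, y) := by
  intro v
  induction v using Sym2.ind with
  | _ x y =>
    intro hv
    obtain ⟨hvT, hcr⟩ := hv
    cases x with
    | up i =>
      cases y with
      | up j =>
        rw [cross_uc_iff] at hcr
        by_cases hij : i < a
        · exact ⟨up i, up j, hij, by simp only [SideR]; omega, rfl⟩
        · exact ⟨up j, up i, by simp only [SideL]; omega, by simp only [SideR]; omega,
            Sym2.eq_swap⟩
      | low j =>
        rw [cross_cc_iff] at hcr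
        rcases hcr with ⟨h1, h2⟩ | ⟨h1, h2⟩
        · exact ⟨up i, low j, h1, h2, rfl⟩
        · exact ⟨low j, up i, h2, h1, Sym2.eq_swap⟩
    | low i =>
      cases y with
      | up j =>
        rw [Sym2.eq_swap (a := low i), cross_cc_iff] at hcr
        rcases hcr with ⟨h1, h2⟩ | ⟨h1, h2⟩
        · exact ⟨up j, low i, h1, h2, Sym2.eq_swap⟩
        · exact ⟨low i, up j, h2, h1, rfl⟩
      | low j =>
        rw [cross_lc_iff] at hcr
        by_cases hij : b < i
        · exact ⟨low i, low j, hij, by simp only [SideR]; omega, rfl⟩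
        · exact ⟨low j, low i, by simp only [SideL]; omega, by simp only [SideR]; omega,
            Sym2.eq_swap⟩

/-- Global bound on the upper arcs crossing `[ℓ_a, r_b]`, when there is no `C_<` arc. -/
lemma global_U_bound (hT : IsPtolemy T) (hB : CondB T) (hC : CondC T)
    (hCL : ∀ m d, m < a → d < b → s(up m, low d) ∉ T) :
    ∃ Qbar : ℤ, ∀ m q, m < a → a < q → s(up m, up q) ∈ T → q ≤ Qbar := by
  -- per-column bounds
  have hUcol : ∀ m : ℤ, ∃ Q, ∀ q, m < a → a < q → s(up m, up q) ∈ T → q ≤ Q := by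
    intro m
    by_cases hma : m < a
    · by_contra hub
      push_neg at hub
      have hinf : ∀ j : ℤ, ∃ i, j < i ∧ s(up m, up i) ∈ T := by
        intro j
        obtain ⟨q, _, hq2, hq3, hq4⟩ := hub (max j a)
        exact ⟨q, by omega, hq3⟩
      obtain ⟨i, hib, him⟩ := condB_rl hB (up m) hinf b
      exact hCL m i hma hib him
    · exact ⟨0, fun q hma' _ _ => absurd hma' hma⟩
  choose βU hβU using hUcol
  by_contra hub
  push_neg at hub
  have hstep : ∀ P Q : ℤ, ∃ m q, m < P ∧ Q < q ∧ m < a ∧ a < q ∧ s(up m, up q) ∈ T := by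
    intro P Q
    obtain ⟨B, hB'⟩ := ((Set.finite_Icc P a).image βU).bddAbove
    obtain ⟨m, q, hma, hqa, hmem, hq⟩ := hub (max Q B)
    refine ⟨m, q, ?_, by omega, hma, hqa, hmem⟩
    by_contra hPm
    push_neg at hPm
    have h1 : q ≤ βU m := hβU m q hma hqa hmem
    have h2 : βU m ≤ B := hB' (Set.mem_image_of_mem βU (by simp only [Set.mem_Icc]; omega))
    omega
  obtain ⟨cs, hcsU, hconn⟩ := hC
  obtain ⟨g, hh, rfl⟩ : ∃ g hh, cs = s(up g, low hh) := by
    obtain ⟨i, j, h⟩ := hconn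
    exact ⟨i, j, h⟩
  obtain ⟨m₁, q₁, hm₁g, hq₁g, hm₁a, hq₁a, hmem₁⟩ := hstep g g
  have hcross1 : Crosses s(up g, low hh) s(up m₁, up q₁) := by
    rw [cross_cu_iff]; omega
  have hcsT : s(up g, low hh) ∈ T := by
    rcases hcsU with h | h
    · exact h
    · exact absurd hcross1 (h.2 _ hmem₁)
  have hv₁ : s(low hh, up m₁) ∈ T :=
    (hT.2 (up g) (low hh) (up m₁) (up q₁) hcsT hmem₁ hcross1).2.2.1
      (by rw [Sym2.eq_swap]; exact isArc_conn m₁ hh)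
  obtain ⟨m₂, q₂, hm₂, hq₂, hm₂a, hq₂a, hmem₂⟩ := hstep m₁ (βU m₁)
  have hcross2 : Crosses s(low hh, up m₁) s(up m₂, up q₂) := by
    rw [Sym2.eq_swap (a := low hh), cross_cu_iff]; omega
  have hfin : s(up m₁, up q₂) ∈ T :=
    (hT.2 (low hh) (up m₁) (up m₂) (up q₂) hv₁ hmem₂ hcross2).2.2.2
      (isArc_uu (by omega) (by omega) (by omega))
  have := hβU m₁ q₂ hm₁a hq₂a hfin
  omega

/-- Global bound on the lower arcs crossing `[ℓ_a, r_b]`, when there is no `C_<` arc. -/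
lemma global_L_bound (hT : IsPtolemy T) (hB : CondB T) (hC : CondC T)
    (hCL : ∀ m d, m < a → d < b → s(up m, low d) ∉ T) :
    ∃ Cbar : ℤ, ∀ c d, b < c → d < b → s(low c, low d) ∈ T → c ≤ Cbar := by
  have hLcol : ∀ d : ℤ, ∃ C, ∀ c, d < b → b < c → s(low c, low d) ∈ T → c ≤ C := by
    intro d
    by_cases hdb : d < b
    · by_contra hub
      push_neg at hub
      have hinf : ∀ j : ℤ, ∃ i, j < i ∧ s(low d, low i) ∈ T := by
        intro j
        obtain ⟨c, _, hc2, hc3, hc4⟩ := hub (max j b)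
        exact ⟨c, by omega, by rwa [Sym2.eq_swap]⟩
      obtain ⟨i, hia, him⟩ := condB_lu hB (low d) hinf a
      exact hCL i d hia hdb (by rwa [Sym2.eq_swap])
    · exact ⟨0, fun c hdb' _ _ => absurd hdb' hdb⟩
  choose βL hβL using hLcol
  by_contra hub
  push_neg at hub
  have hstep : ∀ DD C : ℤ, ∃ c d, d < DD ∧ C < c ∧ b < c ∧ d < b ∧ s(low c, low d) ∈ T := by
    intro DD C
    obtain ⟨B, hB'⟩ := ((Set.finite_Icc DD b).image βL).bddAbove
    obtain ⟨c, d, hcb, hdb, hmem, hc⟩ := hub (max C B)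
    refine ⟨c, d, ?_, by omega, hcb, hdb, hmem⟩
    by_contra hDd
    push_neg at hDd
    have h1 : c ≤ βL d := hβL d c hdb hcb hmem
    have h2 : βL d ≤ B := hB' (Set.mem_image_of_mem βL (by simp only [Set.mem_Icc]; omega))
    omega
  obtain ⟨cs, hcsU, hconn⟩ := hC
  obtain ⟨g, hh, rfl⟩ : ∃ g hh, cs = s(up g, low hh) := by
    obtain ⟨i, j, h⟩ := hconn
    exact ⟨i, j, h⟩
  obtain ⟨c₁, d₁, hd₁, hc₁, hc₁b, hd₁b, hmem₁⟩ := hstep (min b hh) hh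
  have hcross1 : Crosses s(up g, low hh) s(low c₁, low d₁) := by
    rw [cross_cl_iff]; omega
  have hcsT : s(up g, low hh) ∈ T := by
    rcases hcsU with h | h
    · exact h
    · exact absurd hcross1 (h.2 _ hmem₁)
  have hw₁ : s(up g, low d₁) ∈ T :=
    (hT.2 (up g) (low hh) (low c₁) (low d₁) hcsT hmem₁ hcross1).2.1 (isArc_conn g d₁)
  have hga : ¬ g < a := fun h => hCL g d₁ h hd₁b hw₁
  obtain ⟨c₂, d₂, hd₂, hc₂, hc₂b, hd₂b, hmem₂⟩ := hstep d₁ (max (βL d₁) c₁)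
  have hcross2 : Crosses s(up g, low d₁) s(low c₂, low d₂) := by
    rw [cross_cl_iff]; omega
  have hfin : s(low d₁, low c₂) ∈ T :=
    (hT.2 (up g) (low d₁) (low c₂) (low d₂) hw₁ hmem₂ hcross2).2.2.1
      (isArc_ll (by omega) (by omega) (by omega))
  have := hβL d₁ c₂ hd₁b hc₂b (by rwa [Sym2.eq_swap] at hfin)
  omega

/-- No diagonal escape for connecting arcs in `C_>`, when there is no `C_<` arc. -/
lemma global_G_bound (hT : IsPtolemy T) (hB : CondB T) (hC : CondC T)
    (hCL : ∀ m d, m < a → d < b → s(up m, low d) ∉ T) :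
    ∃ H₀ Q₀ : ℤ, ∀ h q, b < h → a < q → s(up q, low h) ∈ T → h ≤ H₀ ∨ q ≤ Q₀ := by
  obtain ⟨Qbar, hQbar⟩ := global_U_bound hT hB hC hCL
  by_contra hub
  push_neg at hub
  obtain ⟨cs, hcsU, hconn⟩ := hC
  obtain ⟨g, hh, rfl⟩ : ∃ g hh, cs = s(up g, low hh) := by
    obtain ⟨i, j, h⟩ := hconn
    exact ⟨i, j, h⟩
  obtain ⟨h₁, q₁, hh₁b, hq₁a, hmem₁, hh₁, hq₁⟩ := hub (max b hh) (max (max a g) Qbar)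
  have hcross1 : Crosses s(up g, low hh) s(up q₁, low h₁) := by
    rw [cross_cc_iff]; omega
  have hcsT : s(up g, low hh) ∈ T := by
    rcases hcsU with h | h
    · exact h
    · exact absurd hcross1 (h.2 _ hmem₁)
  have hv : s(low hh, up q₁) ∈ T :=
    (hT.2 (up g) (low hh) (up q₁) (low h₁) hcsT hmem₁ hcross1).2.2.1
      (by rw [Sym2.eq_swap]; exact isArc_conn q₁ hh)
  have hinf : ∀ j : ℤ, ∃ i, j < i ∧ s(up q₁, low i) ∈ T := by
    intro j
    obtain ⟨h₂, q₂, hh₂b, hq₂a, hmem₂, hh₂, hq₂⟩ := hub (max j (max b hh)) q₁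
    have hcross2 : Crosses s(low hh, up q₁) s(up q₂, low h₂) := by
      rw [Sym2.eq_swap (a := low hh), cross_cc_iff]; omega
    have : s(up q₁, low h₂) ∈ T :=
      (hT.2 (low hh) (up q₁) (up q₂) (low h₂) hv hmem₂ hcross2).2.2.2 (isArc_conn q₁ h₂)
    exact ⟨h₂, by omega, this⟩
  obtain ⟨i, hia, him⟩ := condB_lu hB (up q₁) hinf a
  have := hQbar i q₁ hia (by omega) (by rwa [Sym2.eq_swap] at him)
  omega

end Conn
end Strip
namespace Strip
open MPoint

section ConnDom
variable {T : Set Curve} {a b : ℤ}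

lemma conn_dom (hT : IsPtolemy T) (hB : CondB T) (hC : CondC T) :
    ∃ D : Set Curve, D.Finite ∧
      (∀ v ∈ D, ∃ x2 y2, SideL a b x2 ∧ SideR a b y2 ∧ s(x2, y2) ∈ T ∧ v = s(x2, y2)) ∧
      (∀ x1 y1, SideL a b x1 → SideR a b y1 → s(x1, y1) ∈ T →
        ∃ x2 y2, s(x2, y2) ∈ D ∧ SideL a b x2 ∧ SideR a b y2 ∧ s(x2, y2) ∈ T ∧
          LLe x1 x2 ∧ RLe y1 y2) := by
  by_cases hCL : ∃ m d, m < a ∧ d < b ∧ s(up m, low d) ∈ T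
  · -- C_< is nonempty
    obtain ⟨dstar, ⟨m₀, hm₀a, hdst, hm₀T⟩, hdmax⟩ :=
      Int.exists_greatest_of_bdd (P := fun d => ∃ m, m < a ∧ d < b ∧ s(up m, low d) ∈ T)
        ⟨b, fun z hz => by obtain ⟨m, _, h2, _⟩ := hz; omega⟩
        (by obtain ⟨m, d, h1, h2, h3⟩ := hCL; exact ⟨d, m, h1, h2, h3⟩)
    obtain ⟨pstar, ⟨d₀, hpsa, hd₀b, hpsT⟩, hpmax⟩ :=
      Int.exists_greatest_of_bdd (P := fun m => ∃ d, m < a ∧ d < b ∧ s(up m, low d) ∈ T)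
        ⟨a, fun z hz => by obtain ⟨d, h1, _, _⟩ := hz; omega⟩
        (by obtain ⟨m, d, h1, h2, h3⟩ := hCL; exact ⟨m, d, h1, h2, h3⟩)
    have hcol1 : ∀ m : ℤ, ∃ Dm : Set Curve, Dm.Finite ∧
        (∀ v ∈ Dm, ∃ x2 y2, SideL a b x2 ∧ SideR a b y2 ∧ s(x2, y2) ∈ T ∧ v = s(x2, y2)) ∧
        (∀ d, m < a → d < b → s(up m, low d) ∈ T →
          ∃ x2 y2, s(x2, y2) ∈ Dm ∧ SideL a b x2 ∧ SideR a b y2 ∧ s(x2, y2) ∈ T ∧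
            LLe (up m) x2 ∧ RLe (low d) y2) := by
      intro m
      by_cases hm : m < a ∧ ∃ d, d < b ∧ s(up m, low d) ∈ T
      · obtain ⟨hma, hne⟩ := hm
        obtain ⟨dm, ⟨hdmb, hdmT⟩, hdmmax⟩ :=
          Int.exists_greatest_of_bdd (P := fun d => d < b ∧ s(up m, low d) ∈ T)
            ⟨b, fun z hz => le_of_lt hz.1⟩ hne
        refine ⟨{s(up m, low dm)}, Set.finite_singleton _, ?_, ?_⟩
        · rintro v rfl
          exact ⟨up m, low dm, hma, hdmb, hdmT, rfl⟩
        · intro d _ hd hdT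
          exact ⟨up m, low dm, rfl, hma, hdmb, hdmT, le_refl m, hdmmax d ⟨hd, hdT⟩⟩
      · refine ⟨∅, Set.finite_empty, by simp, ?_⟩
        intro d hma hd hdT
        exact absurd ⟨hma, d, hd, hdT⟩ hm
    have hcol2 : ∀ m : ℤ, ∃ Dm : Set Curve, Dm.Finite ∧
        (∀ v ∈ Dm, ∃ x2 y2, SideL a b x2 ∧ SideR a b y2 ∧ s(x2, y2) ∈ T ∧ v = s(x2, y2)) ∧
        (∀ q, pstar < m → m < a → a < q → s(up m, up q) ∈ T →
          ∃ x2 y2, s(x2, y2) ∈ Dm ∧ SideL a b x2 ∧ SideR a b y2 ∧ s(x2, y2) ∈ T ∧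
            LLe (up m) x2 ∧ RLe (up q) y2) := by
      intro m
      by_cases hm : pstar < m ∧ m < a ∧ ∃ q, a < q ∧ s(up m, up q) ∈ T
      · obtain ⟨hmp, hma, hne⟩ := hm
        have hnoCLm : ∀ d, d < b → s(up m, low d) ∉ T := fun d hd hdT =>
          absurd (hpmax m ⟨d, hma, hd, hdT⟩) (by omega)
        have hbdd : ∃ Q, ∀ q, a < q ∧ s(up m, up q) ∈ T → q ≤ Q := by
          by_contra hubq
          push_neg at hubq
          have hinf : ∀ j : ℤ, ∃ i, j < i ∧ s(up m, up i) ∈ T := by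
            intro j
            obtain ⟨q, hq1, hq2⟩ := hubq (max j a)
            exact ⟨q, by omega, hq1.2⟩
          obtain ⟨i, hib, him⟩ := condB_rl hB (up m) hinf b
          exact hnoCLm i hib him
        obtain ⟨qm, ⟨hqa, hqT⟩, hqmax⟩ := Int.exists_greatest_of_bdd hbdd hne
        refine ⟨{s(up m, up qm)}, Set.finite_singleton _, ?_, ?_⟩
        · rintro v rfl
          exact ⟨up m, up qm, hma, hqa, hqT, rfl⟩
        · intro q _ _ hq hqT'
          exact ⟨up m, up qm, rfl, hma, hqa, hqT, le_refl m, hqmax q ⟨hq, hqT'⟩⟩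
      · refine ⟨∅, Set.finite_empty, by simp, ?_⟩
        intro q hmp hma hq hqT
        exact absurd ⟨hmp, hma, q, hq, hqT⟩ hm
    have hcol3 : ∀ d : ℤ, ∃ Dd : Set Curve, Dd.Finite ∧
        (∀ v ∈ Dd, ∃ x2 y2, SideL a b x2 ∧ SideR a b y2 ∧ s(x2, y2) ∈ T ∧ v = s(x2, y2)) ∧
        (∀ c, dstar < d → d < b → b < c → s(low c, low d) ∈ T →
          ∃ x2 y2, s(x2, y2) ∈ Dd ∧ SideL a b x2 ∧ SideR a b y2 ∧ s(x2, y2) ∈ T ∧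
            LLe (low c) x2 ∧ RLe (low d) y2) := by
      intro d
      by_cases hd : dstar < d ∧ d < b ∧ ∃ c, b < c ∧ s(low c, low d) ∈ T
      · obtain ⟨hdd, hdb, hne⟩ := hd
        have hbdd : ∃ C, ∀ c, b < c ∧ s(low c, low d) ∈ T → c ≤ C := by
          by_contra hubc
          push_neg at hubc
          have hinf : ∀ j : ℤ, ∃ i, j < i ∧ s(low d, low i) ∈ T := by
            intro j
            obtain ⟨c, hc1, hc2⟩ := hubc (max j b)
            exact ⟨c, by omega, by rw [Sym2.eq_swap]; exact hc1.2⟩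
          obtain ⟨i, hia, him⟩ := condB_lu hB (low d) hinf a
          have : d ≤ dstar := hdmax d ⟨i, hia, hdb, by rwa [Sym2.eq_swap] at him⟩
          omega
        obtain ⟨cd, ⟨hcdb, hcdT⟩, hcdmax⟩ := Int.exists_greatest_of_bdd hbdd hne
        refine ⟨{s(low cd, low d)}, Set.finite_singleton _, ?_, ?_⟩
        · rintro v rfl
          exact ⟨low cd, low d, hcdb, hdb, hcdT, rfl⟩
        · intro c _ _ hc hcT
          exact ⟨low cd, low d, rfl, hcdb, hdb, hcdT, hcdmax c ⟨hc, hcT⟩, le_refl d⟩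
      · refine ⟨∅, Set.finite_empty, by simp, ?_⟩
        intro c hdd hdb hc hcT
        exact absurd ⟨hdd, hdb, c, hc, hcT⟩ hd
    choose F1 hF1f hF1m hF1c using hcol1
    choose F2 hF2f hF2m hF2c using hcol2
    choose F3 hF3f hF3m hF3c using hcol3
    refine ⟨({s(up m₀, low dstar), s(up pstar, low d₀)} : Set Curve) ∪
      ((⋃ m ∈ Set.Ioo m₀ a, F1 m) ∪ ((⋃ m ∈ Set.Ioo pstar a, F2 m) ∪
        (⋃ d ∈ Set.Ioo dstar b, F3 d))), ?_, ?_, ?_⟩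
    · exact ((Set.finite_singleton _).insert _).union
        (((Set.finite_Ioo _ _).biUnion fun m _ => hF1f m).union
          (((Set.finite_Ioo _ _).biUnion fun m _ => hF2f m).union
            ((Set.finite_Ioo _ _).biUnion fun d _ => hF3f d)))
    · rintro v (hv | (hv | (hv | hv)))
      · rcases hv with rfl | rfl
        · exact ⟨up m₀, low dstar, hm₀a, hdst, hm₀T, rfl⟩
        · exact ⟨up pstar, low d₀, hpsa, hd₀b, hpsT, rfl⟩
      · obtain ⟨m, _, hvm⟩ := Set.mem_iUnion₂.mp hv
        exact hF1m m v hvm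
      · obtain ⟨m, _, hvm⟩ := Set.mem_iUnion₂.mp hv
        exact hF2m m v hvm
      · obtain ⟨d, _, hvd⟩ := Set.mem_iUnion₂.mp hv
        exact hF3m d v hvd
    · intro x1 y1 hx1 hy1 h1T
      cases x1 with
      | up m =>
        cases y1 with
        | up q =>
          rcases le_or_gt m pstar with hmp | hmp
          · exact ⟨up pstar, low d₀, Set.mem_union_left _ (Or.inr rfl),
              hpsa, hd₀b, hpsT, hmp, trivial⟩
          · obtain ⟨x2, y2, hmem, h1, h2, h3, h4, h5⟩ := hF2c m q hmp hx1 hy1 h1T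
            exact ⟨x2, y2, Set.mem_union_right _ (Set.mem_union_right _ (Set.mem_union_left _
              (Set.mem_biUnion ⟨hmp, hx1⟩ hmem))), h1, h2, h3, h4, h5⟩
        | low d =>
          have hds : d ≤ dstar := hdmax d ⟨m, hx1, hy1, h1T⟩
          rcases le_or_gt m m₀ with hmm | hmm
          · exact ⟨up m₀, low dstar, Set.mem_union_left _ (Or.inl rfl),
              hm₀a, hdst, hm₀T, hmm, hds⟩
          · obtain ⟨x2, y2, hmem, h1, h2, h3, h4, h5⟩ := hF1c m d hx1 hy1 h1T
            exact ⟨x2, y2, Set.mem_union_right _ (Set.mem_union_left _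
              (Set.mem_biUnion ⟨hmm, hx1⟩ hmem)), h1, h2, h3, h4, h5⟩
      | low c =>
        cases y1 with
        | up q =>
          exact ⟨up pstar, low d₀, Set.mem_union_left _ (Or.inr rfl),
            hpsa, hd₀b, hpsT, trivial, trivial⟩
        | low d =>
          rcases le_or_gt d dstar with hds | hds
          · exact ⟨up m₀, low dstar, Set.mem_union_left _ (Or.inl rfl),
              hm₀a, hdst, hm₀T, trivial, hds⟩
          · obtain ⟨x2, y2, hmem, h1, h2, h3, h4, h5⟩ := hF3c d c hds hy1 hx1 h1T
            exact ⟨x2, y2, Set.mem_union_right _ (Set.mem_union_right _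
              (Set.mem_union_right _ (Set.mem_biUnion ⟨hds, hy1⟩ hmem))), h1, h2, h3, h4, h5⟩
  · -- C_< is empty
    push_neg at hCL
    obtain ⟨Qbar, hQbar⟩ := global_U_bound hT hB hC hCL
    obtain ⟨Cbar, hCbar⟩ := global_L_bound hT hB hC hCL
    obtain ⟨H₀, Q₀, hHQ⟩ := global_G_bound hT hB hC hCL
    have hfamU : ∀ q : ℤ, ∃ Dq : Set Curve, Dq.Finite ∧
        (∀ v ∈ Dq, ∃ x2 y2, SideL a b x2 ∧ SideR a b y2 ∧ s(x2, y2) ∈ T ∧ v = s(x2, y2)) ∧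
        (∀ m, a < q → m < a → s(up m, up q) ∈ T →
          ∃ x2 y2, s(x2, y2) ∈ Dq ∧ SideL a b x2 ∧ SideR a b y2 ∧ s(x2, y2) ∈ T ∧
            LLe (up m) x2 ∧ RLe (up q) y2) := by
      intro q
      by_cases hq : a < q ∧ ∃ m, m < a ∧ s(up m, up q) ∈ T
      · obtain ⟨hqa, hne⟩ := hq
        obtain ⟨mq, ⟨hmqa, hmqT⟩, hmqmax⟩ :=
          Int.exists_greatest_of_bdd (P := fun m => m < a ∧ s(up m, up q) ∈ T)
            ⟨a, fun z hz => le_of_lt hz.1⟩ hne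
        refine ⟨{s(up mq, up q)}, Set.finite_singleton _, ?_, ?_⟩
        · rintro v rfl
          exact ⟨up mq, up q, hmqa, hqa, hmqT, rfl⟩
        · intro m _ hm hmT
          exact ⟨up mq, up q, rfl, hmqa, hqa, hmqT, hmqmax m ⟨hm, hmT⟩, le_refl q⟩
      · refine ⟨∅, Set.finite_empty, by simp, ?_⟩
        intro m hqa hm hmT
        exact absurd ⟨hqa, m, hm, hmT⟩ hq
    have hfamL : ∀ c : ℤ, ∃ Dc : Set Curve, Dc.Finite ∧
        (∀ v ∈ Dc, ∃ x2 y2, SideL a b x2 ∧ SideR a b y2 ∧ s(x2, y2) ∈ T ∧ v = s(x2, y2)) ∧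
        (∀ d, b < c → d < b → s(low c, low d) ∈ T →
          ∃ x2 y2, s(x2, y2) ∈ Dc ∧ SideL a b x2 ∧ SideR a b y2 ∧ s(x2, y2) ∈ T ∧
            LLe (low c) x2 ∧ RLe (low d) y2) := by
      intro c
      by_cases hc : b < c ∧ ∃ d, d < b ∧ s(low c, low d) ∈ T
      · obtain ⟨hcb, hne⟩ := hc
        obtain ⟨dc, ⟨hdcb, hdcT⟩, hdcmax⟩ :=
          Int.exists_greatest_of_bdd (P := fun d => d < b ∧ s(low c, low d) ∈ T)
            ⟨b, fun z hz => le_of_lt hz.1⟩ hne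
        refine ⟨{s(low c, low dc)}, Set.finite_singleton _, ?_, ?_⟩
        · rintro v rfl
          exact ⟨low c, low dc, hcb, hdcb, hdcT, rfl⟩
        · intro d _ hd hdT
          exact ⟨low c, low dc, rfl, hcb, hdcb, hdcT, le_refl c, hdcmax d ⟨hd, hdT⟩⟩
      · refine ⟨∅, Set.finite_empty, by simp, ?_⟩
        intro d hcb hd hdT
        exact absurd ⟨hcb, d, hd, hdT⟩ hc
    have hfamG : ∀ h : ℤ, ∃ Dh : Set Curve, Dh.Finite ∧
        (∀ v ∈ Dh, ∃ x2 y2, SideL a b x2 ∧ SideR a b y2 ∧ s(x2, y2) ∈ T ∧ v = s(x2, y2)) ∧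
        (∀ q, b < h → a < q → s(up q, low h) ∈ T →
          ∃ x2 y2, s(x2, y2) ∈ Dh ∧ SideL a b x2 ∧ SideR a b y2 ∧ s(x2, y2) ∈ T ∧
            LLe (low h) x2 ∧ RLe (up q) y2) := by
      intro h
      by_cases hh : b < h ∧ ∃ q, a < q ∧ s(up q, low h) ∈ T
      · obtain ⟨hhb, hne⟩ := hh
        by_cases hrow : ∃ Q, ∀ q, a < q ∧ s(up q, low h) ∈ T → q ≤ Q
        · obtain ⟨qh, ⟨hqha, hqhT⟩, hqhmax⟩ := Int.exists_greatest_of_bdd hrow hne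
          refine ⟨{s(low h, up qh)}, Set.finite_singleton _, ?_, ?_⟩
          · rintro v rfl
            exact ⟨low h, up qh, hhb, hqha, by rwa [Sym2.eq_swap], rfl⟩
          · intro q _ hq hqT
            exact ⟨low h, up qh, rfl, hhb, hqha, by rwa [Sym2.eq_swap],
              le_refl h, hqhmax q ⟨hq, hqT⟩⟩
        · push_neg at hrow
          have hinf : ∀ j : ℤ, ∃ i, j < i ∧ s(low h, up i) ∈ T := by
            intro j
            obtain ⟨q, hq1, hq2⟩ := hrow (max j a)
            exact ⟨q, by omega, by rw [Sym2.eq_swap]; exact hq1.2⟩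
          obtain ⟨i, hib, him⟩ := condB_rl hB (low h) hinf b
          refine ⟨{s(low h, low i)}, Set.finite_singleton _, ?_, ?_⟩
          · rintro v rfl
            exact ⟨low h, low i, hhb, hib, him, rfl⟩
          · intro q _ hq hqT
            exact ⟨low h, low i, rfl, hhb, hib, him, le_refl h, trivial⟩
      · refine ⟨∅, Set.finite_empty, by simp, ?_⟩
        intro q hhb hq hqT
        exact absurd ⟨hhb, q, hq, hqT⟩ hh
    have hfamC : ∀ q : ℤ, ∃ Dq : Set Curve, Dq.Finite ∧
        (∀ v ∈ Dq, ∃ x2 y2, SideL a b x2 ∧ SideR a b y2 ∧ s(x2, y2) ∈ T ∧ v = s(x2, y2)) ∧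
        (∀ h, a < q → b < h → s(up q, low h) ∈ T →
          ∃ x2 y2, s(x2, y2) ∈ Dq ∧ SideL a b x2 ∧ SideR a b y2 ∧ s(x2, y2) ∈ T ∧
            LLe (low h) x2 ∧ RLe (up q) y2) := by
      intro q
      by_cases hq : a < q ∧ ∃ h, b < h ∧ s(up q, low h) ∈ T
      · obtain ⟨hqa, hne⟩ := hq
        by_cases hcol : ∃ H, ∀ h, b < h ∧ s(up q, low h) ∈ T → h ≤ H
        · obtain ⟨hq', ⟨hhqb, hhqT⟩, hhqmax⟩ := Int.exists_greatest_of_bdd hcol hne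
          refine ⟨{s(low hq', up q)}, Set.finite_singleton _, ?_, ?_⟩
          · rintro v rfl
            exact ⟨low hq', up q, hhqb, hqa, by rwa [Sym2.eq_swap], rfl⟩
          · intro h _ hh hhT
            exact ⟨low hq', up q, rfl, hhqb, hqa, by rwa [Sym2.eq_swap],
              hhqmax h ⟨hh, hhT⟩, le_refl q⟩
        · push_neg at hcol
          have hinf : ∀ j : ℤ, ∃ i, j < i ∧ s(up q, low i) ∈ T := by
            intro j
            obtain ⟨h, hh1, hh2⟩ := hcol (max j b)
            exact ⟨h, by omega, hh1.2⟩
          obtain ⟨i, hia, him⟩ := condB_lu hB (up q) hinf a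
          refine ⟨{s(up i, up q)}, Set.finite_singleton _, ?_, ?_⟩
          · rintro v rfl
            exact ⟨up i, up q, hia, hqa, by rwa [Sym2.eq_swap] at him, rfl⟩
          · intro h _ hh hhT
            exact ⟨up i, up q, rfl, hia, hqa, by rwa [Sym2.eq_swap] at him,
              trivial, le_refl q⟩
      · refine ⟨∅, Set.finite_empty, by simp, ?_⟩
        intro h hqa hh hhT
        exact absurd ⟨hqa, h, hh, hhT⟩ hq
    choose FU hFUf hFUm hFUc using hfamU
    choose FL hFLf hFLm hFLc using hfamL
    choose FG hFGf hFGm hFGc using hfamG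
    choose FC hFCf hFCm hFCc using hfamC
    refine ⟨(⋃ q ∈ Set.Ioc a Qbar, FU q) ∪ ((⋃ c ∈ Set.Ioc b Cbar, FL c) ∪
      ((⋃ h ∈ Set.Ioc b H₀, FG h) ∪ (⋃ q ∈ Set.Ioc a Q₀, FC q))), ?_, ?_, ?_⟩
    · exact ((Set.finite_Ioc _ _).biUnion fun q _ => hFUf q).union
        (((Set.finite_Ioc _ _).biUnion fun c _ => hFLf c).union
          (((Set.finite_Ioc _ _).biUnion fun h _ => hFGf h).union
            ((Set.finite_Ioc _ _).biUnion fun q _ => hFCf q)))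
    · rintro v (hv | (hv | (hv | hv)))
      · obtain ⟨q, _, hvq⟩ := Set.mem_iUnion₂.mp hv
        exact hFUm q v hvq
      · obtain ⟨c, _, hvc⟩ := Set.mem_iUnion₂.mp hv
        exact hFLm c v hvc
      · obtain ⟨h, _, hvh⟩ := Set.mem_iUnion₂.mp hv
        exact hFGm h v hvh
      · obtain ⟨q, _, hvq⟩ := Set.mem_iUnion₂.mp hv
        exact hFCm q v hvq
    · intro x1 y1 hx1 hy1 h1T
      cases x1 with
      | up m =>
        cases y1 with
        | up q =>
          have hqQ : q ≤ Qbar := hQbar m q hx1 hy1 h1T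
          obtain ⟨x2, y2, hmem, h1, h2, h3, h4, h5⟩ := hFUc q m hy1 hx1 h1T
          exact ⟨x2, y2, Set.mem_union_left _ (Set.mem_biUnion ⟨hy1, hqQ⟩ hmem),
            h1, h2, h3, h4, h5⟩
        | low d => exact absurd h1T (hCL m d hx1 hy1)
      | low c =>
        cases y1 with
        | up q =>
          have h1T' : s(up q, low c) ∈ T := by rwa [Sym2.eq_swap] at h1T
          rcases hHQ c q hx1 hy1 h1T' with hcH | hqQ
          · obtain ⟨x2, y2, hmem, h1, h2, h3, h4, h5⟩ := hFGc c q hx1 hy1 h1T'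
            exact ⟨x2, y2, Set.mem_union_right _ (Set.mem_union_right _ (Set.mem_union_left _
              (Set.mem_biUnion ⟨hx1, hcH⟩ hmem))), h1, h2, h3, h4, h5⟩
          · obtain ⟨x2, y2, hmem, h1, h2, h3, h4, h5⟩ := hFCc q c hy1 hx1 h1T'
            exact ⟨x2, y2, Set.mem_union_right _ (Set.mem_union_right _ (Set.mem_union_right _
              (Set.mem_biUnion ⟨hy1, hqQ⟩ hmem))), h1, h2, h3, h4, h5⟩
        | low d =>
          have hcC : c ≤ Cbar := hCbar c d hx1 hy1 h1T
          obtain ⟨x2, y2, hmem, h1, h2, h3, h4, h5⟩ := hFLc c d hx1 hy1 h1T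
          exact ⟨x2, y2, Set.mem_union_right _ (Set.mem_union_left _
            (Set.mem_biUnion ⟨hx1, hcC⟩ hmem)), h1, h2, h3, h4, h5⟩

lemma conn_case (hT : IsPtolemy T) (hB : CondB T) (hC : CondC T) (a b : ℤ) :
    ∃ S0 : Set Curve, S0.Finite ∧ IsTauBasis (crossSet T s(up a, low b)) S0 := by
  obtain ⟨D, hDfin, hDmem, hDcov⟩ := conn_dom (a := a) (b := b) hT hB hC
  refine ⟨D, hDfin, ?_, ?_⟩
  · intro v hv
    obtain ⟨x2, y2, hx2, hy2, hmem, rfl⟩ := hDmem v hv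
    exact ⟨hmem, crossesU_of_sides hx2 hy2⟩
  · intro u₁ hu₁
    obtain ⟨x1, y1, hx1, hy1, rfl⟩ := mem_conn_decomp u₁ hu₁
    obtain ⟨x2, y2, hD, hx2, hy2, h2T, hl, hr⟩ := hDcov x1 y1 hx1 hy1 hu₁.1
    exact ⟨s(x2, y2), hD, serve_cross hx1 hy1 hx2 hy2 hl hr,
      fun hcr => middle_in hT hx2 hy2 hx1 hy1 h2T hu₁.1 hl hr hcr⟩

end ConnDom
end Strip

open Strip in
/-- A Ptolemy diagram satisfying conditions (B) and (C) is τ-compact. -/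
theorem ptolemy_condB_condC_tauCompact (T : Set Curve) (hT : IsPtolemy T)
    (hB : CondB T) (hC : CondC T) : TauCompact T := by
  intro u
  induction u using Sym2.ind with
  | _ x y =>
    intro hu
    cases x with
    | up i =>
      cases y with
      | up j =>
        obtain ⟨h1, h2, h3⟩ := arc_uu_facts hu
        rcases lt_or_gt_of_ne h1 with h | h
        · exact upper_case T hT hB i j (by omega)
        · rw [Sym2.eq_swap]
          exact upper_case T hT hB j i (by omega)
      | low j => exact conn_case hT hB hC i j
    | low i =>
      cases y with
      | up j =>
        rw [Sym2.eq_swap]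
        exact conn_case hT hB hC j i
      | low j =>
        obtain ⟨h1, h2, h3⟩ := arc_ll_facts hu
        rcases lt_or_gt_of_ne h1 with h | h
        · rw [Sym2.eq_swap]
          exact lower_case T hT hB j i (by omega)
        · exact lower_case T hT hB i j (by omega)
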